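/- With Ψ(I) = ∏_{i<j∈I}(1+ζ_{ij}) and g(I,J) = (Ψ^{*(−1)} * D_I Ψ)(J) in the convolution algebra on subsets of {1,…,n} (I, J disjoint), and ι a choice function assigning to each nonempty I an element ι(I) ∈ I with I' = I∖{ι(I)}: g satisfies g(∅,J) = δ_{∅,J} and, for I ≠ ∅, g(I,J) = (∏_{i∈I'} (1+ζ_{i,ι(I)})) · Σ_{K⊆J} (∏_{i∈K} ζ_{i,ι(I)}) · g(I' ∪ K, J∖K). -/

import Mathlib

/-- Ordered pairs `(i,j)` with `i < j` and both endpoints in `I`: the possible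
edges of a simple graph on vertex set `I ⊆ Fin n`. -/
def edgesOn (n : ℕ) (I : Finset (Fin n)) : Finset (Fin n × Fin n) :=
  Finset.univ.filter fun p => p.1 < p.2 ∧ p.1 ∈ I ∧ p.2 ∈ I

/-- Simple graphs on vertex set `I`, identified with their edge sets. -/
def graphsOn (n : ℕ) (I : Finset (Fin n)) : Finset (Finset (Fin n × Fin n)) :=
  (edgesOn n I).powerset

/-- Adjacency relation of an edge set. -/
def adjE {n : ℕ} (G : Finset (Fin n × Fin n)) (i j : Fin n) : Prop :=
  (i, j) ∈ G ∨ (j, i) ∈ G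

/-- The edge set `G` makes the (nonempty) vertex set `I` connected. -/
def ConnOn {n : ℕ} (I : Finset (Fin n)) (G : Finset (Fin n × Fin n)) : Prop :=
  I.Nonempty ∧ ∀ i ∈ I, ∀ j ∈ I, Relation.ReflTransGen (adjE G) i j

open Classical in
/-- Connected graphs on the vertex set `I`. -/
noncomputable def connGraphsOn (n : ℕ) (I : Finset (Fin n)) :
    Finset (Finset (Fin n × Fin n)) :=
  (graphsOn n I).filter (ConnOn I)

open Classical in
/-- Trees on the `n` labeled vertices `{1,…,n}`: connected graphs with `n-1` edges. -/
noncomputable def treesOn (n : ℕ) : Finset (Finset (Fin n × Fin n)) :=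
  (connGraphsOn n Finset.univ).filter fun G => G.card = n - 1

/-- Convolution product on the algebra of complex functions on subsets of `{1,…,n}`. -/
noncomputable def conv (n : ℕ) (f g : Finset (Fin n) → ℂ) : Finset (Fin n) → ℂ :=
  fun I => ∑ J ∈ I.powerset, f J * g (I \ J)

/-- The unit of the convolution algebra: the indicator of the empty set. -/
def deltaA (n : ℕ) : Finset (Fin n) → ℂ := fun I => if I = ∅ then 1 else 0

/-- Convolution powers. -/
noncomputable def convPow (n : ℕ) (f : Finset (Fin n) → ℂ) : ℕ → (Finset (Fin n) → ℂ)
  | 0 => deltaA n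
  | k + 1 => conv n f (convPow n f k)

/-- The exponential in the convolution algebra,
`exp_𝒜 f = 1_𝒜 + f + f^{*2}/2! + ⋯ + f^{*n}/n!`. -/
noncomputable def expA (n : ℕ) (f : Finset (Fin n) → ℂ) : Finset (Fin n) → ℂ :=
  fun I => ∑ k ∈ Finset.range (n + 1), (Nat.factorial k : ℂ)⁻¹ * convPow n f k I

/-- `Ψ(I) = ∏_{i<j ∈ I} (1 + ζ_{ij})`. -/
noncomputable def PsiFn (n : ℕ) (ζ : Fin n → Fin n → ℂ) : Finset (Fin n) → ℂ :=
  fun I => ∏ p ∈ edgesOn n I, (1 + ζ p.1 p.2)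

/-- `D_I f(J) = f(I ∪ J)` if `I ∩ J = ∅`, `0` otherwise. -/
noncomputable def DI (n : ℕ) (I : Finset (Fin n)) (f : Finset (Fin n) → ℂ) :
    Finset (Fin n) → ℂ :=
  fun J => if Disjoint I J then f (I ∪ J) else 0

/-!
Write `j = ι(I)` and `I' = I ∖ {j}`. For `M` disjoint from `I`, peeling the vertex `j` off
`Ψ(I ∪ M)` gives `Ψ(I ∪ M) = ∏_{i ∈ I'} (1 + ζ_{ij}) · ∏_{i ∈ M} (1 + ζ_{ij}) · Ψ(I' ∪ M)`, and
expanding the middle product as `∑_{K ⊆ M} ∏_{i ∈ K} ζ_{ij}` writes `D_I Ψ (M)` as a sum of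
`D_{I' ∪ K} Ψ (M ∖ K)`. Summing over `K` commutes with convolution against `Ψ^{*(-1)}`, which gives
the recursion; for `I = ∅` it is `Ψ^{*(-1)} * Ψ = δ`, by commutativity of the convolution.
-/

open Finset

lemma conv_comm (n : ℕ) (f g : Finset (Fin n) → ℂ) : conv n f g = conv n g f := by
  funext I
  have hinvol : ∀ J ∈ I.powerset, I \ (I \ J) = J := fun J hJ =>
    Finset.sdiff_sdiff_eq_self (mem_powerset.mp hJ)
  refine sum_nbij' (I \ ·) (I \ ·) (by simp) (by simp) hinvol hinvol fun J hJ => ?_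
  rw [hinvol J hJ, mul_comm]

lemma DI_empty (n : ℕ) (f : Finset (Fin n) → ℂ) : DI n ∅ f = f := by
  funext J
  simp [DI]

lemma conv_eq_sum_conv_of_eq_sum {n : ℕ} {h f a : Finset (Fin n) → ℂ}
    {b : Finset (Fin n) → Finset (Fin n) → ℂ} {J : Finset (Fin n)}
    (hf : ∀ M ⊆ J, f M = ∑ K ∈ M.powerset, a K * b K (M \ K)) :
    conv n h f J = ∑ K ∈ J.powerset, a K * conv n h (b K) (J \ K) := by
  calc conv n h f J
      = ∑ L ∈ J.powerset, ∑ K ∈ (J \ L).powerset, h L * (a K * b K ((J \ L) \ K)) := by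
        unfold conv
        exact sum_congr rfl fun L _ => by rw [hf _ sdiff_subset, mul_sum]
    _ = ∑ K ∈ J.powerset, ∑ L ∈ (J \ K).powerset, h L * (a K * b K ((J \ K) \ L)) := by
        refine sum_comm' (fun L K => ?_) |>.trans (sum_congr rfl fun K _ => sum_congr rfl
          fun L _ => by rw [sdiff_sdiff_comm])
        simp only [mem_powerset, subset_sdiff]
        tauto
    _ = ∑ K ∈ J.powerset, a K * conv n h (b K) (J \ K) := by
        simp only [conv, mul_sum, mul_left_comm]

lemma edgesOn_insert (n : ℕ) {j : Fin n} {S : Finset (Fin n)} (hj : j ∉ S) :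
    edgesOn n (insert j S) = edgesOn n S ∪ S.image fun i => (min i j, max i j) := by
  ext ⟨a, b⟩
  simp only [edgesOn, mem_filter, mem_univ, true_and, mem_union, mem_insert, mem_image,
    Prod.mk.injEq]
  constructor
  · rintro ⟨hab, rfl | ha, rfl | hb⟩
    · exact absurd hab (lt_irrefl _)
    · exact Or.inr ⟨b, hb, min_eq_right hab.le, max_eq_left hab.le⟩
    · exact Or.inr ⟨a, ha, min_eq_left hab.le, max_eq_right hab.le⟩
    · exact Or.inl ⟨hab, ha, hb⟩
  · rintro (⟨hab, ha, hb⟩ | ⟨i, hi, rfl, rfl⟩)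
    · exact ⟨hab, Or.inr ha, Or.inr hb⟩
    · have hij : i ≠ j := fun h => hj (h ▸ hi)
      rcases hij.lt_or_gt with h | h <;> simp [h.le, h, hi]

lemma PsiFn_insert {n : ℕ} {ζ : Fin n → Fin n → ℂ} (hsym : ∀ i j, ζ i j = ζ j i)
    {j : Fin n} {S : Finset (Fin n)} (hj : j ∉ S) :
    PsiFn n ζ (insert j S) = (∏ i ∈ S, (1 + ζ i j)) * PsiFn n ζ S := by
  have hne : ∀ i ∈ S, i ≠ j := fun i hi h => hj (h ▸ hi)
  have hinj : Set.InjOn (fun i => (min i j, max i j)) S := by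
    intro x hx y hy hxy
    simp only [Prod.mk.injEq] at hxy
    have := hne x hx; have := hne y hy
    grind
  have hdisj : Disjoint (edgesOn n S) (S.image fun i => (min i j, max i j)) := by
    simp only [disjoint_right, mem_image, edgesOn, mem_filter, mem_univ, true_and]
    rintro _ ⟨i, -, rfl⟩ ⟨-, hmin, hmax⟩
    rcases le_total i j with h | h
    · exact hj (max_eq_right h ▸ hmax)
    · exact hj (min_eq_right h ▸ hmin)
  rw [PsiFn, edgesOn_insert n hj, prod_union hdisj, prod_image hinj, mul_comm, PsiFn]
  congr 1
  refine prod_congr rfl fun i _ => ?_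
  rcases le_total i j with h | h
  · simp [h]
  · simp [h, hsym i j]

lemma DI_PsiFn_eq_sum {n : ℕ} {ζ : Fin n → Fin n → ℂ} (hsym : ∀ i j, ζ i j = ζ j i)
    {I M : Finset (Fin n)} {j : Fin n} (hj : j ∈ I) (hIM : Disjoint I M) :
    DI n I (PsiFn n ζ) M = (∏ i ∈ I.erase j, (1 + ζ i j)) *
      ∑ K ∈ M.powerset, (∏ i ∈ K, ζ i j) * DI n (I.erase j ∪ K) (PsiFn n ζ) (M \ K) := by
  have hI'M : Disjoint (I.erase j) M := hIM.mono_left (erase_subset j I)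
  have hj' : j ∉ I.erase j ∪ M := by
    simp [disjoint_left.mp hIM hj]
  have hunion : I ∪ M = insert j (I.erase j ∪ M) := by rw [← insert_union, insert_erase hj]
  rw [DI, if_pos hIM, hunion, PsiFn_insert hsym hj', prod_union hI'M, prod_one_add M, mul_assoc,
    sum_mul]
  congr 1
  refine sum_congr rfl fun K hK => ?_
  have hdisj : Disjoint (I.erase j ∪ K) (M \ K) :=
    disjoint_union_left.mpr ⟨hI'M.mono_right sdiff_subset, disjoint_sdiff⟩
  rw [DI, if_pos hdisj, union_assoc, union_sdiff_of_subset (mem_powerset.mp hK)]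

/-- the Kirkwood–Salsburg-type equation for
`g(I,J) = (Ψ^{*(-1)} * D_I Ψ)(J)`, where `ι` is a choice function with
`ι(I) ∈ I` and `I' = I ∖ {ι(I)}`. -/
theorem KS_equation (n : ℕ) (ζ : Fin n → Fin n → ℂ) (hsym : ∀ i j, ζ i j = ζ j i)
    (iota : Finset (Fin n) → Fin n) (hiota : ∀ I, I.Nonempty → iota I ∈ I)
    (invPsi : Finset (Fin n) → ℂ)
    (hinv : conv n (PsiFn n ζ) invPsi = deltaA n) :
    (∀ J : Finset (Fin n),
      conv n invPsi (DI n ∅ (PsiFn n ζ)) J = if J = ∅ then 1 else 0) ∧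
    (∀ I J : Finset (Fin n), I.Nonempty → Disjoint I J →
      conv n invPsi (DI n I (PsiFn n ζ)) J =
        (∏ i ∈ I.erase (iota I), (1 + ζ i (iota I))) *
          ∑ K ∈ J.powerset, (∏ i ∈ K, ζ i (iota I)) *
            conv n invPsi (DI n (I.erase (iota I) ∪ K) (PsiFn n ζ)) (J \ K)) := by
  refine ⟨fun J => by rw [DI_empty, conv_comm, hinv]; rfl, fun I J hI hIJ => ?_⟩
  simp only [mul_sum, ← mul_assoc]
  refine conv_eq_sum_conv_of_eq_sum fun M hM => ?_
  rw [DI_PsiFn_eq_sum hsym (hiota I hI) (hIJ.mono_right hM), mul_sum]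
  simp only [mul_assoc]
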